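/- arXiv:2506.09296 — 4 statements merged into one kernel-verified Lean document; each statement's English description precedes it below -/
import Mathlib

section
/- Let r ≥ 3 be odd and for 0 ≤ j ≤ r−2 set Δ_j = (−1)^j sin(2π(j+1)/r)/sin(2π/r). If j is even, then Δ_j > 0 when 0 ≤ j ≤ (r−3)/2 and Δ_j < 0 when (r−1)/2 ≤ j ≤ r−2. -/
/-- For odd `r ≥ 3`, `Δ_j = (−1)^j sin(2π(j+1)/r)/sin(2π/r)`, and `j` even
with `0 ≤ j ≤ r−2`: `Δ_j > 0` when `j ≤ (r−3)/2` and `Δ_j < 0` when `(r−1)/2 ≤ j`. -/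
theorem stmt1 (r : ℕ) (hr : 3 ≤ r) (hodd : Odd r) (j : ℕ) (hj : j ≤ r - 2) (hje : Even j)
    (Δ : ℝ)
    (hΔ : Δ = (-1) ^ j * (Real.sin (2 * Real.pi * (j + 1) / r) / Real.sin (2 * Real.pi / r))) :
    (j ≤ (r - 3) / 2 → 0 < Δ) ∧ ((r - 1) / 2 ≤ j → Δ < 0) := by
  obtain ⟨m, hm⟩ := hodd
  have hπ := Real.pi_pos
  have hr3 : (3:ℝ) ≤ r := by exact_mod_cast hr
  have hrpos : (0:ℝ) < r := by linarith
  have hden : 0 < Real.sin (2 * Real.pi / r) := by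
    apply Real.sin_pos_of_pos_of_lt_pi
    · positivity
    · rw [div_lt_iff₀ hrpos]
      nlinarith
  have hneg1 : ((-1:ℝ))^j = 1 := hje.neg_one_pow
  rw [hΔ, hneg1, one_mul]
  constructor
  · intro h
    apply div_pos _ hden
    apply Real.sin_pos_of_pos_of_lt_pi
    · positivity
    · rw [div_lt_iff₀ hrpos]
      have h2 : (2:ℝ) * (j + 1) < r := by
        have : 2 * (j + 1) < r := by omega
        push_cast
        exact_mod_cast this
      nlinarith
  · intro h
    apply div_neg_of_neg_of_pos _ hden
    have key : Real.sin (2 * Real.pi * (j + 1) / r)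
        = Real.sin (2 * Real.pi * (j + 1) / r - 2 * Real.pi) := by
      rw [Real.sin_sub_two_pi]
    rw [key]
    have hjr : (j:ℝ) + 1 < r := by
      have : j + 1 < r := by omega
      exact_mod_cast this
    have h2 : (r:ℝ) < 2 * (j + 1) := by
      have : r < 2 * (j + 1) := by omega
      exact_mod_cast this
    apply Real.sin_neg_of_neg_of_neg_pi_lt
    · rw [sub_neg, div_lt_iff₀ hrpos]
      nlinarith
    · have hkey : Real.pi < 2 * Real.pi * (j + 1) / r := by
        rw [lt_div_iff₀ hrpos]
        nlinarith
      linarith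
end

section
/- Let r ≥ 3 be odd, and define λ_{n,a} = (−1)^a sin(2π(n+1)(a+1)/r)/sin(2π(n+1)/r) and Δ_j = (−1)^j sin(2π(j+1)/r)/sin(2π/r). Set n_r = (r−1)/2 if r ≡ 1 (mod 4) and n_r = (r−3)/2 if r ≡ 3 (mod 4). Then for even j with 0 ≤ j ≤ r−3 (so that sin(2π(j+1)/r) ≠ 0), sgn(λ_{j,n_r}) = sgn(Δ_j) if r ≡ 3 (mod 4), and sgn(λ_{j,n_r}) = −sgn(Δ_j) if r ≡ 1 (mod 4). -/
/-- sign of `λ_{j,n_r}` versus sign of `Δ_j`, for even `j` with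
`0 ≤ j ≤ r−3`, where `n_r = (r−1)/2` if `r ≡ 1 (mod 4)` and `(r−3)/2` if `r ≡ 3 (mod 4)`. -/
theorem stmt2 (r : ℕ) (hr : 3 ≤ r) (hodd : Odd r)
    (nr : ℕ) (hnr1 : r % 4 = 1 → nr = (r - 1) / 2) (hnr3 : r % 4 = 3 → nr = (r - 3) / 2)
    (j : ℕ) (hje : Even j) (hj : j ≤ r - 3)
    (lam Δ : ℝ)
    (hlam : lam = (-1) ^ nr *
      (Real.sin (2 * Real.pi * (j + 1) * (nr + 1) / r) / Real.sin (2 * Real.pi * (j + 1) / r)))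
    (hΔ : Δ = (-1) ^ j * (Real.sin (2 * Real.pi * (j + 1) / r) / Real.sin (2 * Real.pi / r))) :
    (r % 4 = 3 → Real.sign lam = Real.sign Δ) ∧
    (r % 4 = 1 → Real.sign lam = - Real.sign Δ) := by
  have hj3 : j + 3 ≤ r := by omega
  have hrR : (3:ℝ) ≤ (r:ℝ) := by exact_mod_cast hr
  have hrpos : (0:ℝ) < (r:ℝ) := by linarith
  set θ : ℝ := Real.pi * (j + 1) / r with hθdef
  have hπ := Real.pi_pos
  have hθpos : 0 < θ := by
    apply div_pos _ hrpos
    positivity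
  have hθlt : θ < Real.pi := by
    rw [hθdef, div_lt_iff₀ hrpos]
    have : (j:ℝ) + 1 < r := by
      have : (j:ℝ) + 3 ≤ r := by exact_mod_cast hj3
      linarith
    nlinarith
  have hs : 0 < Real.sin θ := Real.sin_pos_of_pos_of_lt_pi hθpos hθlt
  have ht : 0 < Real.sin (2 * Real.pi / r) := by
    apply Real.sin_pos_of_pos_of_lt_pi
    · positivity
    · rw [div_lt_iff₀ hrpos]; nlinarith
  have hc : Real.cos θ ≠ 0 := by
    intro h
    rw [Real.cos_eq_zero_iff] at h
    obtain ⟨k, hk⟩ := h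
    rw [hθdef] at hk
    have h2 : Real.pi * ((j:ℝ) + 1) * 2 = (2 * (k:ℝ) + 1) * Real.pi * r := by
      field_simp at hk
      linear_combination Real.pi * hk
    have h3 : ((j:ℝ) + 1) * 2 = (2 * (k:ℝ) + 1) * r := by
      have := Real.pi_ne_zero
      nlinarith [h2]
    have h4 : ((j:ℤ) + 1) * 2 = (2 * k + 1) * r := by exact_mod_cast h3
    have hev : Even (((j:ℤ) + 1) * 2) := ⟨(j:ℤ) + 1, by ring⟩
    have hod : Odd ((2 * k + 1) * (r:ℤ)) :=
      (odd_two_mul_add_one k).mul ((Int.odd_coe_nat r).2 hodd)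
    rw [h4] at hev
    exact (Int.not_even_iff_odd.2 hod) hev
  -- rewrite the B argument as 2θ
  have hB : Real.sin (2 * Real.pi * (j + 1) / r) = 2 * Real.sin θ * Real.cos θ := by
    rw [show 2 * Real.pi * ((j:ℝ) + 1) / r = 2 * θ by rw [hθdef]; ring, Real.sin_two_mul]
  have hjpow : ((-1:ℝ)) ^ j = 1 := hje.neg_one_pow
  have h2s : 0 < 2 * Real.sin θ := by linarith
  rcases Nat.even_or_odd (r % 4) with h4 | h4
  · exfalso
    obtain ⟨t, ht⟩ := h4
    obtain ⟨m, hm⟩ := hodd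
    omega
  constructor
  · intro h3
    have hm : ∃ m, r = 4 * m + 3 := ⟨r / 4, by omega⟩
    obtain ⟨m, hm⟩ := hm
    have hnr : nr = 2 * m := by rw [hnr3 h3]; omega
    have hA : Real.sin (2 * Real.pi * (j + 1) * (nr + 1) / r)
        = Real.sin θ := by
      have : 2 * Real.pi * ((j:ℝ) + 1) * ((nr:ℝ) + 1) / r = (j + 1 : ℕ) * Real.pi - θ := by
        subst hm
        rw [hnr, hθdef]
        push_cast
        have : (4:ℝ) * m + 3 ≠ 0 := by positivity
        field_simp
        ring
      rw [this, Real.sin_nat_mul_pi_sub]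
      have : ((-1:ℝ)) ^ (j + 1) = -1 := by
        rw [pow_succ, hjpow]; ring
      rw [this]; ring
    have hpow : ((-1:ℝ)) ^ nr = 1 := by rw [hnr, pow_mul]; norm_num
    rw [hlam, hΔ, hA, hB, hpow, hjpow, one_mul, one_mul]
    rcases hc.lt_or_gt with hcn | hcp
    · have h1 : Real.sin θ / (2 * Real.sin θ * Real.cos θ) < 0 :=
        div_neg_of_pos_of_neg hs (mul_neg_of_pos_of_neg h2s hcn)
      have h2 : 2 * Real.sin θ * Real.cos θ / Real.sin (2 * Real.pi / r) < 0 :=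
        div_neg_of_neg_of_pos (mul_neg_of_pos_of_neg h2s hcn) ht
      rw [Real.sign_of_neg h1, Real.sign_of_neg h2]
    · have h1 : 0 < Real.sin θ / (2 * Real.sin θ * Real.cos θ) :=
        div_pos hs (mul_pos h2s hcp)
      have h2 : 0 < 2 * Real.sin θ * Real.cos θ / Real.sin (2 * Real.pi / r) :=
        div_pos (mul_pos h2s hcp) ht
      rw [Real.sign_of_pos h1, Real.sign_of_pos h2]
  · intro h1'
    have hm : ∃ m, r = 4 * m + 1 := ⟨r / 4, by omega⟩
    obtain ⟨m, hm⟩ := hm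
    have hnr : nr = 2 * m := by rw [hnr1 h1']; omega
    have hA : Real.sin (2 * Real.pi * (j + 1) * (nr + 1) / r)
        = - Real.sin θ := by
      have : 2 * Real.pi * ((j:ℝ) + 1) * ((nr:ℝ) + 1) / r = (j + 2 : ℕ) * Real.pi - (Real.pi - θ) := by
        subst hm
        rw [hnr, hθdef]
        push_cast
        have : (4:ℝ) * m + 1 ≠ 0 := by positivity
        field_simp
        ring
      rw [this, Real.sin_nat_mul_pi_sub, Real.sin_pi_sub]
      have : ((-1:ℝ)) ^ (j + 2) = 1 := by
        rw [pow_add, hjpow]; norm_num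
      rw [this]; ring
    have hpow : ((-1:ℝ)) ^ nr = 1 := by rw [hnr, pow_mul]; norm_num
    rw [hlam, hΔ, hA, hB, hpow, hjpow, one_mul, one_mul]
    rcases hc.lt_or_gt with hcn | hcp
    · have h1 : 0 < -Real.sin θ / (2 * Real.sin θ * Real.cos θ) :=
        div_pos_of_neg_of_neg (by linarith) (mul_neg_of_pos_of_neg h2s hcn)
      have h2 : 2 * Real.sin θ * Real.cos θ / Real.sin (2 * Real.pi / r) < 0 :=
        div_neg_of_neg_of_pos (mul_neg_of_pos_of_neg h2s hcn) ht
      rw [Real.sign_of_pos h1, Real.sign_of_neg h2]; ring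
    · have h1 : -Real.sin θ / (2 * Real.sin θ * Real.cos θ) < 0 :=
        div_neg_of_neg_of_pos (by linarith) (mul_pos h2s hcp)
      have h2 : 0 < 2 * Real.sin θ * Real.cos θ / Real.sin (2 * Real.pi / r) :=
        div_pos (mul_pos h2s hcp) ht
      rw [Real.sign_of_neg h1, Real.sign_of_pos h2]
end

section
/- Let r ≥ 3 be odd, n_r as above, and j an even integer with 2 ≤ j ≤ r−3 such that r/2 < n_r + j/2 + 1 ≤ r−1. With [k]! = ∏_{s=1}^{k} sin(2πs/r)/sin(2π/r), the sign of [n_r + j/2 + 1]! equals (−1)^{n_r + j/2 + 1 − (r−1)/2}. -/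
/-- With `[k]! = ∏_{s=1}^k sin(2πs/r)/sin(2π/r)`, `n_r` as in the paper,
`j` even with `2 ≤ j ≤ r−3` and `r/2 < n_r + j/2 + 1 ≤ r−1`, the sign of
`[n_r + j/2 + 1]!` is `(−1)^{n_r + j/2 + 1 − (r−1)/2}`. -/
theorem stmt8 (r : ℕ) (hr : 3 ≤ r) (hodd : Odd r)
    (nr : ℕ) (hnr1 : r % 4 = 1 → nr = (r - 1) / 2) (hnr3 : r % 4 = 3 → nr = (r - 3) / 2)
    (j : ℕ) (hje : Even j) (hj2 : 2 ≤ j) (hj : j ≤ r - 3)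
    (hlow : r < 2 * (nr + j / 2 + 1)) (hhigh : nr + j / 2 + 1 ≤ r - 1)
    (qfact : ℕ → ℝ)
    (hqfact : ∀ k, qfact k =
      ∏ s ∈ Finset.Icc 1 k, Real.sin (2 * Real.pi * s / r) / Real.sin (2 * Real.pi / r)) :
    Real.sign (qfact (nr + j / 2 + 1)) = (-1 : ℝ) ^ (nr + j / 2 + 1 - (r - 1) / 2) := by
  have hrodd : r % 2 = 1 := Nat.odd_iff.mp hodd
  set m := nr + j / 2 + 1 with hm
  set c := (r - 1) / 2 with hc
  have hcm : c < m := by omega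
  have hπ : (0:ℝ) < Real.pi := Real.pi_pos
  have hrR : (0:ℝ) < r := by exact_mod_cast (by omega : 0 < r)
  have hr3 : (3:ℝ) ≤ r := by exact_mod_cast hr
  have hden : 0 < Real.sin (2 * Real.pi / r) := by
    apply Real.sin_pos_of_pos_of_lt_pi
    · positivity
    · rw [div_lt_iff₀ hrR]; nlinarith
  set f : ℕ → ℝ := fun s => Real.sin (2 * Real.pi * s / r) / Real.sin (2 * Real.pi / r) with hf
  have hpos : ∀ s ∈ Finset.Ioc 0 c, 0 < f s := by
    intro s hs
    simp only [Finset.mem_Ioc] at hs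
    have h2s : 2 * s < r := by omega
    apply div_pos _ hden
    apply Real.sin_pos_of_pos_of_lt_pi
    · have hs0 : (0:ℝ) < s := by exact_mod_cast hs.1
      positivity
    · rw [div_lt_iff₀ hrR]
      have : (2 * s : ℝ) < r := by exact_mod_cast h2s
      push_cast at this ⊢
      nlinarith
  have hneg : ∀ s ∈ Finset.Ioc c m, f s < 0 := by
    intro s hs
    simp only [Finset.mem_Ioc] at hs
    have h1 : r < 2 * s := by omega
    have h2 : s < r := by omega
    apply div_neg_of_neg_of_pos _ hden
    have h1R : (r:ℝ) < 2 * s := by exact_mod_cast h1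
    have h2R : (s:ℝ) < r := by exact_mod_cast h2
    have hx1 : Real.pi < 2 * Real.pi * s / r := by
      rw [lt_div_iff₀ hrR]; nlinarith
    have hx2 : 2 * Real.pi * s / r < 2 * Real.pi := by
      rw [div_lt_iff₀ hrR]; nlinarith
    have hsin := Real.sin_pos_of_pos_of_lt_pi
      (x := 2 * Real.pi * s / r - Real.pi) (by linarith) (by linarith)
    rw [Real.sin_sub_pi] at hsin
    linarith
  have hsplit : qfact m = (∏ s ∈ Finset.Ioc 0 c, f s) * ∏ s ∈ Finset.Ioc c m, f s := by
    rw [hqfact m, show Finset.Icc 1 m = Finset.Ioc 0 m by ext x; simp; omega,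
      Finset.prod_Ioc_consecutive _ (Nat.zero_le c) (le_of_lt hcm)]
  have hP1 : 0 < ∏ s ∈ Finset.Ioc 0 c, f s := Finset.prod_pos hpos
  have hQ : 0 < ∏ s ∈ Finset.Ioc c m, (-f s) :=
    Finset.prod_pos (fun s hs => neg_pos.mpr (hneg s hs))
  have hcard : (Finset.Ioc c m).card = m - c := Nat.card_Ioc c m
  have hP2 : ∏ s ∈ Finset.Ioc c m, f s
      = (-1 : ℝ) ^ (m - c) * ∏ s ∈ Finset.Ioc c m, (-f s) := by
    rw [show (∏ s ∈ Finset.Ioc c m, (-f s))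
        = ∏ s ∈ Finset.Ioc c m, ((-1 : ℝ) * f s) by simp,
      Finset.prod_mul_distrib, Finset.prod_const, hcard, ← mul_assoc,
      ← pow_add]
    rw [Even.neg_one_pow ⟨m - c, by ring⟩, one_mul]
  rw [hsplit, hP2]
  rcases Nat.even_or_odd (m - c) with he | ho
  · rw [he.neg_one_pow, one_mul]
    exact Real.sign_of_pos (mul_pos hP1 hQ)
  · rw [ho.neg_one_pow, neg_one_mul, mul_neg]
    exact Real.sign_of_neg (neg_lt_zero.mpr (mul_pos hP1 hQ))
end

section
/- Let r ≥ 3 be odd, n_r as above, and let j_1, j_2 be even with 0 ≤ j_1, j_2 ≤ r−3. With [k]! = ∏_{s=1}^k sin(2πs/r)/sin(2π/r), define Δ(n_r,n_r,j)² = [n_r − j/2]! · ([j/2]!)² / [n_r + j/2 + 1]!. Then for j even with 2 ≤ j ≤ r−3, sgn(Δ(n_r,n_r,j)²) = (−1)^{n_r + j/2 − (r−3)/2}, and consequently sgn((−1)^{(j_1+j_2)/2} Δ(n_r,n_r,j_1)² Δ(n_r,n_r,j_2)²) = 1 when j_1, j_2 ≥ 2. -/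
lemma aux_sin_pos {r s : ℕ} (hs : 1 ≤ s) (h : 2 * s < r) :
    0 < Real.sin (2 * Real.pi * s / r) := by
  have hr0 : (0:ℝ) < r := by
    have : 0 < r := by omega
    exact_mod_cast this
  have hs0 : (0:ℝ) < s := by exact_mod_cast hs
  have hsr : (2 * s : ℝ) < r := by exact_mod_cast h
  apply Real.sin_pos_of_pos_of_lt_pi
  · positivity
  · rw [div_lt_iff₀ hr0]
    nlinarith [Real.pi_pos]

lemma aux_sin_neg {r s : ℕ} (h1 : r < 2 * s) (h2 : s < r) :
    Real.sin (2 * Real.pi * s / r) < 0 := by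
  have hr0 : (0:ℝ) < r := by
    have : 0 < r := by omega
    exact_mod_cast this
  have hsr : (r : ℝ) < 2 * s := by exact_mod_cast h1
  have hsr2 : (s : ℝ) < r := by exact_mod_cast h2
  rw [← Real.sin_sub_two_pi]
  apply Real.sin_neg_of_neg_of_neg_pi_lt
  · rw [sub_neg, div_lt_iff₀ hr0]
    nlinarith [Real.pi_pos]
  · have hlt : Real.pi < 2 * Real.pi * s / r := by
      rw [lt_div_iff₀ hr0]
      nlinarith [Real.pi_pos]
    linarith

lemma aux_sign_eq {x : ℝ} {t : ℕ} (h : 0 < (-1:ℝ) ^ t * x) :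
    Real.sign x = (-1:ℝ) ^ t := by
  rcases Nat.even_or_odd t with he | ho
  · rw [he.neg_one_pow] at h ⊢
    rw [one_mul] at h
    exact Real.sign_of_pos h
  · rw [ho.neg_one_pow] at h ⊢
    rw [neg_one_mul, neg_pos] at h
    exact Real.sign_of_neg h

/-- With quantum factorials `[k]! = ∏_{s=1}^k sin(2πs/r)/sin(2π/r)` and
`Δ(n_r,n_r,j)² = [n_r − j/2]!·([j/2]!)²/[n_r + j/2 + 1]!`, for even `j` with
`2 ≤ j ≤ r−3` one has `sgn(Δ(n_r,n_r,j)²) = (−1)^{n_r + j/2 − (r−3)/2}`, and hence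
`sgn((−1)^{(j₁+j₂)/2} Δ(n_r,n_r,j₁)² Δ(n_r,n_r,j₂)²) = 1` when `j₁, j₂ ≥ 2`. -/
theorem stmt11 (r : ℕ) (hr : 3 ≤ r) (hodd : Odd r)
    (nr : ℕ) (hnr1 : r % 4 = 1 → nr = (r - 1) / 2) (hnr3 : r % 4 = 3 → nr = (r - 3) / 2)
    (qfact : ℕ → ℝ)
    (hqfact : ∀ k, qfact k =
      ∏ s ∈ Finset.Icc 1 k, Real.sin (2 * Real.pi * s / r) / Real.sin (2 * Real.pi / r))
    (Δsq : ℕ → ℝ)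
    (hΔsq : ∀ j, Δsq j = qfact (nr - j / 2) * (qfact (j / 2)) ^ 2 / qfact (nr + j / 2 + 1))
    (j1 j2 : ℕ) (he1 : Even j1) (he2 : Even j2) (hj1 : j1 ≤ r - 3) (hj2 : j2 ≤ r - 3) :
    (∀ j : ℕ, Even j → 2 ≤ j → j ≤ r - 3 →
      Real.sign (Δsq j) = (-1 : ℝ) ^ (nr + j / 2 - (r - 3) / 2)) ∧
    (2 ≤ j1 → 2 ≤ j2 →
      Real.sign ((-1 : ℝ) ^ ((j1 + j2) / 2) * Δsq j1 * Δsq j2) = 1) := by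
  have hr2 : r % 2 = 1 := Nat.odd_iff.mp hodd
  set m := (r - 1) / 2 with hm
  have h2m : 2 * m + 1 = r := by omega
  -- denominators positive: sin(2π/r) > 0
  have hden : 0 < Real.sin (2 * Real.pi / r) := by
    have := aux_sin_pos (le_refl 1) (show 2 * 1 < r by omega)
    simpa using this
  -- qfact positive for k ≤ m
  have hqpos : ∀ k, k ≤ m → 0 < qfact k := by
    intro k hk
    rw [hqfact]
    apply Finset.prod_pos
    intro s hs
    simp only [Finset.mem_Icc] at hs
    exact div_pos (aux_sin_pos hs.1 (by omega)) hden
  -- sign-flipped positivity for m ≤ k ≤ r-1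
  have hflip : ∀ k, m ≤ k → k ≤ r - 1 → 0 < (-1:ℝ) ^ (k - m) * qfact k := by
    intro k hk hk'
    induction k, hk using Nat.le_induction with
    | base =>
      simp only [Nat.sub_self, pow_zero, one_mul]
      exact hqpos m le_rfl
    | succ k hk ih =>
      have ihk := ih (by omega)
      have hstep : qfact (k + 1) = qfact k *
          (Real.sin (2 * Real.pi * ((k + 1 : ℕ) : ℝ) / r) / Real.sin (2 * Real.pi / r)) := by
        rw [hqfact, hqfact, Finset.prod_Icc_succ_top (by omega : 1 ≤ k + 1)]
      have hneg : Real.sin (2 * Real.pi * ((k + 1 : ℕ) : ℝ) / r) / Real.sin (2 * Real.pi / r) < 0 :=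
        div_neg_of_neg_of_pos (aux_sin_neg (by omega) (by omega)) hden
      have hexp : k + 1 - m = (k - m) + 1 := by omega
      rw [hstep, hexp, pow_succ]
      nlinarith [mul_pos ihk (neg_pos.mpr hneg)]
  -- bounds on nr
  have hnrm : m - 1 ≤ nr ∧ nr ≤ m := by
    rcases (by omega : r % 4 = 1 ∨ r % 4 = 3) with h | h
    · rw [hnr1 h]; omega
    · rw [hnr3 h]; omega
  have hm1 : 1 ≤ m := by omega
  -- main positivity claim
  have key : ∀ j : ℕ, j % 2 = 0 → 2 ≤ j → j ≤ r - 3 →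
      0 < (-1:ℝ) ^ (nr + j / 2 - (r - 3) / 2) * Δsq j := by
    intro j hje hj2 hjr
    have hh1 : 1 ≤ j / 2 := by omega
    have hh2 : j / 2 ≤ m - 1 := by omega
    have hA : 0 < qfact (nr - j / 2) := hqpos _ (by omega)
    have hB : 0 < qfact (j / 2) := hqpos _ (by omega)
    have hC : 0 < (-1:ℝ) ^ (nr + j / 2 + 1 - m) * qfact (nr + j / 2 + 1) :=
      hflip _ (by omega) (by omega)
    have hexp : nr + j / 2 - (r - 3) / 2 = nr + j / 2 + 1 - m := by omega
    rw [hexp, hΔsq]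
    have hCne : qfact (nr + j / 2 + 1) ≠ 0 := by
      intro h0
      rw [h0, mul_zero] at hC
      exact lt_irrefl 0 hC
    have hinv : 0 < (-1:ℝ) ^ (nr + j / 2 + 1 - m) * (qfact (nr + j / 2 + 1))⁻¹ := by
      have heq : (-1:ℝ) ^ (nr + j / 2 + 1 - m) * (qfact (nr + j / 2 + 1))⁻¹ =
          ((-1:ℝ) ^ (nr + j / 2 + 1 - m) * qfact (nr + j / 2 + 1)) *
            ((qfact (nr + j / 2 + 1))⁻¹) ^ 2 := by
        field_simp
      rw [heq]
      exact mul_pos hC (pow_two_pos_of_ne_zero (inv_ne_zero hCne))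
    have heq2 : (-1:ℝ) ^ (nr + j / 2 + 1 - m) *
        (qfact (nr - j / 2) * qfact (j / 2) ^ 2 / qfact (nr + j / 2 + 1)) =
        (qfact (nr - j / 2) * qfact (j / 2) ^ 2) *
          ((-1:ℝ) ^ (nr + j / 2 + 1 - m) * (qfact (nr + j / 2 + 1))⁻¹) := by
      rw [div_eq_mul_inv]; ring
    rw [heq2]
    exact mul_pos (by positivity) hinv
  constructor
  · intro j hje hj2 hjr
    exact aux_sign_eq (key j (Nat.even_iff.mp hje) hj2 hjr)
  · intro hj1' hj2'
    have he1' := Nat.even_iff.mp he1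
    have he2' := Nat.even_iff.mp he2
    have P1 := key j1 he1' hj1' hj1
    have P2 := key j2 he2' hj2' hj2
    set t1 := nr + j1 / 2 - (r - 3) / 2 with ht1
    set t2 := nr + j2 / 2 - (r - 3) / 2 with ht2
    have hpar : (j1 + j2) / 2 % 2 = (t1 + t2) % 2 := by omega
    have hpow : (-1:ℝ) ^ ((j1 + j2) / 2) = (-1:ℝ) ^ t1 * (-1:ℝ) ^ t2 := by
      rw [← pow_add]
      rcases Nat.even_or_odd ((j1 + j2) / 2) with hs | hs
      · rw [hs.neg_one_pow, (Nat.even_iff.mpr (by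
          have := Nat.even_iff.mp hs; omega)).neg_one_pow]
      · rw [hs.neg_one_pow, (Nat.odd_iff.mpr (by
          have := Nat.odd_iff.mp hs; omega)).neg_one_pow]
    rw [hpow]
    apply Real.sign_of_pos
    have := mul_pos P1 P2
    nlinarith [this]
end
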